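/- arXiv:2104.10556 — 4 statements merged into one kernel-verified Lean document; each statement's English description precedes it below -/
import Mathlib

section
/- Every nonempty subset of Thompson's semigroup has a unique minimal element with respect to the total order ≼ (i.e., ≼ is a well-order on S). -/
/-!
Every element of Thompson's semigroup has a unique normal form `X_{i₁} ⋯ X_{iₙ}` with
`i₁ ≤ ⋯ ≤ iₙ`. It is computed by letting each generator `X_a` act on sorted words, moving it
rightwards past smaller letters `c` by `X_a X_c = X_c X_{a+1}`; this action respects the defining
relations, so the normal form is well defined on the quotient. Then `ind` is the length of the
normal form and `ind_i` the multiplicity of `i` in it. For sorted words of equal length, having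
more copies of the first letter at which the multiplicities differ means being lexicographically
smaller, so `≺` is the pullback of the shortlex order on words along the injective normal-form
map; hence it is well-founded and total.
-/

/-- The defining relations of Thompson's semigroup:
`X_j * X_i = X_i * X_{j+1}` for `i < j`. -/
def thompsonRel : FreeMonoid ℕ → FreeMonoid ℕ → Prop := fun a b =>
  ∃ i j : ℕ, i < j ∧ a = FreeMonoid.of j * FreeMonoid.of i ∧
    b = FreeMonoid.of i * FreeMonoid.of (j + 1)

def thompsonCon : Con (FreeMonoid ℕ) := conGen thompsonRel

/-- Thompson's semigroup (with unit). -/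
def ThompsonS : Type := thompsonCon.Quotient

instance : Monoid ThompsonS := inferInstanceAs (Monoid thompsonCon.Quotient)

/-- The generators of Thompson's semigroup. -/
def X (n : ℕ) : ThompsonS := thompsonCon.mk' (FreeMonoid.of n)


/-- The index of an element of Thompson's semigroup: the sum of the exponents in
its unique normal form, equivalently the common length of all words representing it. -/
noncomputable def ind (x : ThompsonS) : ℕ :=
  sInf {n | ∃ w : FreeMonoid ℕ, thompsonCon.mk' w = x ∧ w.length = n}

/-- `indAt i x` is the exponent of `X_i` in the unique normal form of `x`:
the number of occurrences of the letter `i` in the unique sorted word representing `x`. -/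
noncomputable def indAt (i : ℕ) (x : ThompsonS) : ℕ :=
  sInf {n | ∃ w : List ℕ, w.Pairwise (· ≤ ·) ∧
    thompsonCon.mk' (FreeMonoid.ofList w) = x ∧ w.count i = n}

/-- The strict total order `≺` on Thompson's semigroup determined by
`(ind, ind_0, ind_1, ind_2, ...)`. -/
def tlt (u v : ThompsonS) : Prop :=
  ind u < ind v ∨
    (ind u = ind v ∧ (indAt 0 v < indAt 0 u ∨
      (indAt 0 u = indAt 0 v ∧ ∃ i : ℕ, 1 ≤ i ∧
        (∀ j, j < i → indAt j u = indAt j v) ∧ indAt i v < indAt i u)))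

/-- The total order `≼` on Thompson's semigroup. -/
def tle (u v : ThompsonS) : Prop := tlt u v ∨ u = v

namespace ThompsonS

def consNF : ℕ → List ℕ → List ℕ
  | a, [] => [a]
  | a, c :: w => if a ≤ c then a :: c :: w else c :: consNF (a + 1) w

theorem consNF_cons_of_le {a c : ℕ} (h : a ≤ c) (w : List ℕ) :
    consNF a (c :: w) = a :: c :: w := if_pos h

theorem consNF_cons_of_lt {a c : ℕ} (h : c < a) (w : List ℕ) :
    consNF a (c :: w) = c :: consNF (a + 1) w := if_neg (Nat.not_le.2 h)

theorem consNF_consNF_of_lt {i j : ℕ} (h : i < j) (w : List ℕ) :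
    consNF j (consNF i w) = consNF i (consNF (j + 1) w) := by
  induction w generalizing i j with
  | nil => simp [consNF, Nat.not_le.2 h, h.le.trans j.le_succ]
  | cons c w ih =>
    rcases le_or_gt i c with hic | hci
    · rw [consNF_cons_of_le hic, consNF_cons_of_lt h]
      rcases le_or_gt (j + 1) c with hjc | hcj
      · rw [consNF_cons_of_le hjc, consNF_cons_of_le (by omega)]
      · rw [consNF_cons_of_lt hcj, consNF_cons_of_le hic]
    · rw [consNF_cons_of_lt hci, consNF_cons_of_lt (hci.trans h),
        consNF_cons_of_lt (by omega), consNF_cons_of_lt hci, ih (Nat.succ_lt_succ h)]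

theorem length_consNF (a : ℕ) (w : List ℕ) : (consNF a w).length = w.length + 1 := by
  induction w generalizing a with
  | nil => rfl
  | cons c w ih =>
    rcases le_or_gt a c with hac | hca
    · rw [consNF_cons_of_le hac]; rfl
    · rw [consNF_cons_of_lt hca, List.length_cons, ih, List.length_cons]

theorem mem_or_le_of_mem_consNF {a x : ℕ} {w : List ℕ} (hx : x ∈ consNF a w) :
    x ∈ w ∨ a ≤ x := by
  induction w generalizing a with
  | nil => exact .inr (List.mem_singleton.1 hx).ge
  | cons c w ih =>
    rcases le_or_gt a c with hac | hca
    · rw [consNF_cons_of_le hac, List.mem_cons] at hx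
      exact hx.symm.imp id ge_of_eq
    · rw [consNF_cons_of_lt hca, List.mem_cons] at hx
      rcases hx with rfl | hx
      · exact .inl List.mem_cons_self
      · exact (ih hx).imp (List.mem_cons_of_mem c) (by omega)

theorem pairwise_consNF (a : ℕ) {w : List ℕ} (hw : w.Pairwise (· ≤ ·)) :
    (consNF a w).Pairwise (· ≤ ·) := by
  induction w generalizing a with
  | nil => exact List.pairwise_singleton _ a
  | cons c w ih =>
    obtain ⟨hc, hw'⟩ := List.pairwise_cons.1 hw
    rcases le_or_gt a c with hac | hca
    · rw [consNF_cons_of_le hac]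
      refine List.pairwise_cons.2 ⟨fun x hx => ?_, hw⟩
      rcases List.mem_cons.1 hx with rfl | hx
      exacts [hac, hac.trans (hc x hx)]
    · rw [consNF_cons_of_lt hca]
      refine List.pairwise_cons.2 ⟨fun x hx => ?_, ih _ hw'⟩
      rcases mem_or_le_of_mem_consNF hx with hx | hx
      exacts [hc x hx, by omega]

theorem consNF_of_le {a : ℕ} {w : List ℕ} (h : ∀ x ∈ w, a ≤ x) : consNF a w = a :: w := by
  cases w with
  | nil => rfl
  | cons c w => exact consNF_cons_of_le (h c List.mem_cons_self) w

def nfAction : FreeMonoid ℕ →* Function.End (List ℕ) := FreeMonoid.lift consNF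

theorem thompsonCon_le_ker : thompsonCon ≤ Con.ker nfAction := by
  refine Con.conGen_le.2 ?_
  rintro _ _ ⟨i, j, h, rfl, rfl⟩
  exact funext (consNF_consNF_of_lt h)

def nf (x : ThompsonS) : List ℕ := thompsonCon.lift nfAction thompsonCon_le_ker x []

theorem nfAction_ofList (w s : List ℕ) :
    nfAction (FreeMonoid.ofList w) s = w.foldr consNF s := by
  induction w with
  | nil => rfl
  | cons a w ih =>
    rw [FreeMonoid.ofList_cons, map_mul]
    exact congrArg (consNF a) ih

theorem length_foldr_consNF (w s : List ℕ) :
    (w.foldr consNF s).length = w.length + s.length := by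
  induction w with
  | nil => simp
  | cons a w ih => simp only [List.foldr_cons, length_consNF, ih, List.length_cons]; omega

theorem pairwise_foldr_consNF (w : List ℕ) {s : List ℕ} (hs : s.Pairwise (· ≤ ·)) :
    (w.foldr consNF s).Pairwise (· ≤ ·) := by
  induction w with
  | nil => exact hs
  | cons a w ih => exact pairwise_consNF a ih

theorem foldr_consNF_of_pairwise {w : List ℕ} (hw : w.Pairwise (· ≤ ·)) :
    w.foldr consNF [] = w := by
  induction w with
  | nil => rfl
  | cons a w ih =>
    obtain ⟨ha, hw⟩ := List.pairwise_cons.1 hw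
    rw [List.foldr_cons, ih hw, consNF_of_le ha]

theorem mk_of_mul_ofList (a : ℕ) (w : List ℕ) :
    thompsonCon.mk' (FreeMonoid.of a * FreeMonoid.ofList w) =
      thompsonCon.mk' (FreeMonoid.ofList (consNF a w)) := by
  induction w generalizing a with
  | nil => rfl
  | cons c w ih =>
    rcases le_or_gt a c with hac | hca
    · rw [consNF_cons_of_le hac]; rfl
    · have hrel : thompsonCon.mk' (FreeMonoid.of a * FreeMonoid.of c) =
          thompsonCon.mk' (FreeMonoid.of c * FreeMonoid.of (a + 1)) :=
        (Con.eq _).2 (ConGen.Rel.of _ _ ⟨c, a, hca, rfl, rfl⟩)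
      rw [consNF_cons_of_lt hca, FreeMonoid.ofList_cons, FreeMonoid.ofList_cons, ← mul_assoc,
        map_mul, hrel, map_mul, mul_assoc, ← map_mul, ih, map_mul]

theorem nf_mk_ofList (w : List ℕ) :
    nf (thompsonCon.mk' (FreeMonoid.ofList w)) = w.foldr consNF [] :=
  nfAction_ofList w []

theorem exists_mk_ofList_eq (x : ThompsonS) :
    ∃ w : List ℕ, thompsonCon.mk' (FreeMonoid.ofList w) = x :=
  Con.induction_on x fun w => ⟨w.toList, rfl⟩

theorem mk_ofList_foldr_consNF (w : List ℕ) :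
    thompsonCon.mk' (FreeMonoid.ofList (w.foldr consNF [])) =
      thompsonCon.mk' (FreeMonoid.ofList w) := by
  induction w with
  | nil => rfl
  | cons a w ih =>
    rw [List.foldr_cons, ← mk_of_mul_ofList, map_mul, ih, ← map_mul, FreeMonoid.ofList_cons]

theorem mk_ofList_nf (x : ThompsonS) : thompsonCon.mk' (FreeMonoid.ofList (nf x)) = x := by
  obtain ⟨w, rfl⟩ := exists_mk_ofList_eq x
  rw [nf_mk_ofList, mk_ofList_foldr_consNF]

theorem nf_injective : Function.Injective nf := fun x y h => by
  rw [← mk_ofList_nf x, h, mk_ofList_nf]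

theorem pairwise_nf (x : ThompsonS) : (nf x).Pairwise (· ≤ ·) := by
  obtain ⟨w, rfl⟩ := exists_mk_ofList_eq x
  exact nf_mk_ofList w ▸ pairwise_foldr_consNF w List.Pairwise.nil

theorem nf_mk_ofList_of_pairwise {w : List ℕ} (hw : w.Pairwise (· ≤ ·)) :
    nf (thompsonCon.mk' (FreeMonoid.ofList w)) = w := by
  rw [nf_mk_ofList, foldr_consNF_of_pairwise hw]

theorem ind_eq_length_nf (x : ThompsonS) : ind x = (nf x).length := by
  suffices h : {n | ∃ w : FreeMonoid ℕ, thompsonCon.mk' w = x ∧ w.length = n} =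
      {(nf x).length} by rw [ind, h, csInf_singleton]
  refine Set.eq_singleton_iff_unique_mem.2 ⟨⟨_, mk_ofList_nf x, rfl⟩, ?_⟩
  rintro _ ⟨w, rfl, rfl⟩
  rw [← FreeMonoid.ofList_toList w, nf_mk_ofList, length_foldr_consNF, List.length_nil,
    add_zero]
  rfl

theorem indAt_eq_count_nf (i : ℕ) (x : ThompsonS) : indAt i x = (nf x).count i := by
  suffices h : {n | ∃ w : List ℕ, w.Pairwise (· ≤ ·) ∧
      thompsonCon.mk' (FreeMonoid.ofList w) = x ∧ w.count i = n} = {(nf x).count i} by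
    rw [indAt, h, csInf_singleton]
  refine Set.eq_singleton_iff_unique_mem.2 ⟨⟨_, pairwise_nf x, mk_ofList_nf x, rfl⟩, ?_⟩
  rintro _ ⟨w, hw, rfl, rfl⟩
  rw [nf_mk_ofList_of_pairwise hw]

section CountLex

variable {a b : ℕ} {s t : List ℕ}

def CountLex (s t : List ℕ) : Prop :=
  ∃ i, (∀ j < i, s.count j = t.count j) ∧ t.count i < s.count i

theorem countLex_cons_cons_iff :
    CountLex (a :: s) (a :: t) ↔ CountLex s t := by
  simp only [CountLex, List.count_cons, add_left_inj, add_lt_add_iff_right]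

theorem count_eq_zero_of_lt_head {j : ℕ} (hs : (a :: s).Pairwise (· ≤ ·))
    (hj : j < a) : (a :: s).count j = 0 :=
  List.count_eq_zero.2 fun hmem => by
    rcases List.mem_cons.1 hmem with rfl | hmem
    · exact hj.false
    · exact absurd ((List.pairwise_cons.1 hs).1 j hmem) (Nat.not_le.2 hj)

theorem countLex_of_head_lt (hs : (a :: s).Pairwise (· ≤ ·)) (ht : (b :: t).Pairwise (· ≤ ·))
    (hab : a < b) : CountLex (a :: s) (b :: t) := by
  refine ⟨a, fun j hj => ?_, ?_⟩
  · rw [count_eq_zero_of_lt_head hs hj, count_eq_zero_of_lt_head ht (hj.trans hab)]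
  · rw [count_eq_zero_of_lt_head ht hab]
    exact List.count_pos_iff.2 List.mem_cons_self

theorem not_countLex_of_head_lt (hs : (a :: s).Pairwise (· ≤ ·))
    (ht : (b :: t).Pairwise (· ≤ ·)) (hab : a < b) : ¬ CountLex (b :: t) (a :: s) := by
  rintro ⟨i, heq, hlt⟩
  rcases lt_trichotomy i a with hia | rfl | hai
  · rw [count_eq_zero_of_lt_head ht (hia.trans hab)] at hlt
    exact Nat.not_lt_zero _ hlt
  · rw [count_eq_zero_of_lt_head ht hab] at hlt
    exact Nat.not_lt_zero _ hlt
  · have := heq a hai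
    rw [count_eq_zero_of_lt_head ht hab] at this
    exact (List.count_pos_iff.2 List.mem_cons_self).ne this

theorem countLex_iff_lex (hs : s.Pairwise (· ≤ ·)) (ht : t.Pairwise (· ≤ ·))
    (hst : s.length = t.length) : CountLex s t ↔ List.Lex (· < ·) s t := by
  induction s generalizing t with
  | nil =>
    rw [List.length_nil, eq_comm, List.length_eq_zero_iff] at hst
    subst hst
    simp [CountLex]
  | cons a s ih =>
    obtain ⟨b, t, rfl⟩ := List.exists_cons_of_length_eq_add_one hst.symm
    rcases lt_trichotomy a b with hab | rfl | hba
    · exact iff_of_true (countLex_of_head_lt hs ht hab) (.rel hab)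
    · rw [countLex_cons_cons_iff, List.lex_cons_iff]
      exact ih hs.of_cons ht.of_cons (Nat.succ_inj.1 hst)
    · refine iff_of_false (not_countLex_of_head_lt ht hs hba) ?_
      rintro (_ | _ | _) <;> omega

end CountLex

theorem tlt_iff_countLex {u v : ThompsonS} :
    tlt u v ↔ ind u < ind v ∨ ind u = ind v ∧ CountLex (nf u) (nf v) := by
  simp only [tlt, CountLex, ← indAt_eq_count_nf]
  refine or_congr_right (and_congr_right fun _ => ⟨?_, ?_⟩)
  · rintro (h0 | ⟨-, i, -, hi⟩)
    exacts [⟨0, fun j hj => absurd hj j.not_lt_zero, h0⟩, ⟨i, hi⟩]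
  · rintro ⟨_ | i, heq, hlt⟩
    exacts [.inl hlt, .inr ⟨heq 0 i.succ_pos, i + 1, i.succ_pos, heq, hlt⟩]

theorem tlt_iff_shortlex {u v : ThompsonS} : tlt u v ↔ List.Shortlex (· < ·) (nf u) (nf v) := by
  rw [tlt_iff_countLex, List.shortlex_def, ind_eq_length_nf, ind_eq_length_nf]
  refine or_congr_right (and_congr_right fun hlen => ?_)
  exact countLex_iff_lex (pairwise_nf u) (pairwise_nf v) hlen

theorem wellFounded_tlt : WellFounded tlt := by
  have h : tlt = InvImage (List.Shortlex (· < ·)) nf := by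
    ext u v
    exact tlt_iff_shortlex
  exact h ▸ InvImage.wf nf (List.Shortlex.wf wellFounded_lt)

instance : Std.Trichotomous tlt where
  trichotomous _ _ huv hvu := nf_injective <|
    Std.Trichotomous.trichotomous (r := List.Shortlex (· < ·)) _ _
      (mt tlt_iff_shortlex.2 huv) (mt tlt_iff_shortlex.2 hvu)

end ThompsonS

/-- Every nonempty subset of Thompson's semigroup has a unique minimal element
with respect to the total order `≼` (i.e. `≼` is a well-order). -/
theorem thompson_exists_unique_min (A : Set ThompsonS) (hA : A.Nonempty) :
    ∃! m : ThompsonS, m ∈ A ∧ ∀ a ∈ A, tle m a := by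
  obtain ⟨m, hmA, hmin⟩ := ThompsonS.wellFounded_tlt.has_min A hA
  have hle : ∀ a ∈ A, tle m a := fun a ha => or_iff_not_imp_left.2 fun hma =>
    Std.Trichotomous.trichotomous m a hma (hmin a ha)
  refine ⟨m, ⟨hmA, hle⟩, fun m' ⟨hm'A, hm'le⟩ => ?_⟩
  exact (hm'le m hmA).resolve_left (hmin m' hm'A)
end

section
/- The semigroup T generated by A = [[1,0],[0,2]], B = [[2,0],[0,1]], C = [[0,2],[3,0]] is left amenable: the sets F_N = {A^{α} B^{β} C^{γ} : 0 ≤ α, β, γ ≤ N−1} form a left Følner sequence, i.e., for every s ∈ T, |s F_N △ F_N| / |F_N| → 0 as N → ∞. -/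
def MatA : Matrix (Fin 2) (Fin 2) ℤ := !![1, 0; 0, 2]
def MatB : Matrix (Fin 2) (Fin 2) ℤ := !![2, 0; 0, 1]
def MatC : Matrix (Fin 2) (Fin 2) ℤ := !![0, 2; 3, 0]

/-- The multiplicative semigroup generated by `A`, `B`, `C`. -/
def SemigroupT : Subsemigroup (Matrix (Fin 2) (Fin 2) ℤ) :=
  Subsemigroup.closure {MatA, MatB, MatC}

/-- The Følner sets `F_N = {A^α B^β C^γ : 0 ≤ α, β, γ ≤ N-1}`. -/
def FolnerF (N : ℕ) : Finset (Matrix (Fin 2) (Fin 2) ℤ) :=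
  (Finset.range N ×ˢ Finset.range N ×ˢ Finset.range N).image
    fun p => MatA ^ p.1 * MatB ^ p.2.1 * MatC ^ p.2.2

open scoped symmDiff

/-!
Since `A B = B A`, `C A = B C` and `C B = A C`, every element of `T` can be written as
`A^p B^q C^r`, and left multiplication by it sends `A^x B^y C^z` to `A^(p+x) B^(q+y) C^(r+z)` or to
`A^(p+y) B^(q+x) C^(r+z)` according to the parity of `r`. These normal forms are pairwise distinct:
the power of `3` in the determinant recovers `r`, and `C^r` can be cancelled since its determinant
is nonzero. Hence `s = A^p B^q C^r` maps `F_n` injectively into `F_(n+k)`, `k = p + q + r`, so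
`|s F_(n+k) △ F_(n+k)| ≤ 2 ((n+k)^3 - n^3)`, which is `o((n+k)^3)`.
-/

open Finset Filter Matrix

lemma factorization_two_pow_mul_six_pow_three (x c : ℕ) : (2 ^ x * 6 ^ c).factorization 3 = c := by
  rw [show (6 : ℕ) = 2 * 3 from rfl, mul_pow, ← mul_assoc, ← pow_add]
  simp [Nat.factorization_mul, Nat.prime_two, Nat.prime_three]

section

variable {α : Type*} [DecidableEq α] {f : α → α} {F G : Finset α}

theorem Finset.card_image_symmDiff_add_two_mul_card_le (hf : Set.InjOn f F) (hGF : G ⊆ F)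
    (hfG : G.image f ⊆ F) : #(F.image f ∆ F) + 2 * #G ≤ 2 * #F := by
  have hH : G.image f ⊆ F.image f := image_subset_image hGF
  have hcardH : #(G.image f) = #G := card_image_of_injOn (hf.mono hGF)
  have hsub : F.image f ∆ F ⊆ (F.image f \ G.image f) ∪ (F \ G.image f) :=
    sup_le_sup (sdiff_le_sdiff_left hfG) (sdiff_le_sdiff_left hH)
  have hsplitImage := card_sdiff_add_card_eq_card hH
  have hsplitF := card_sdiff_add_card_eq_card hfG
  have hsymm := (card_le_card hsub).trans (card_union_le _ _)
  rw [card_image_of_injOn hf] at hsplitImage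
  omega

theorem Finset.card_image_symmDiff_div_card_le (hf : Set.InjOn f F) (hGF : G ⊆ F)
    (hfG : G.image f ⊆ F) : (#(F.image f ∆ F) : ℝ) / #F ≤ 2 * (1 - #G / #F) := by
  rcases (#F).eq_zero_or_pos with hF | hF
  · simp [hF]
  have hcard : (#(F.image f ∆ F) : ℝ) + 2 * #G ≤ 2 * #F := by
    exact_mod_cast card_image_symmDiff_add_two_mul_card_le hf hGF hfG
  calc (#(F.image f ∆ F) : ℝ) / #F ≤ (2 * #F - 2 * #G) / #F := by gcongr; linarith
    _ = 2 * (1 - #G / #F) := by field_simp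

end

def normalForm (t : ℕ × ℕ × ℕ) : Matrix (Fin 2) (Fin 2) ℤ :=
  MatA ^ t.1 * MatB ^ t.2.1 * MatC ^ t.2.2

lemma MatA_eq_diagonal : MatA = diagonal ![1, 2] := by
  ext i j; fin_cases i <;> fin_cases j <;> rfl

lemma MatB_eq_diagonal : MatB = diagonal ![2, 1] := by
  ext i j; fin_cases i <;> fin_cases j <;> rfl

lemma MatA_pow_mul_MatB_pow (a b : ℕ) : MatA ^ a * MatB ^ b = diagonal ![2 ^ b, 2 ^ a] := by
  rw [MatA_eq_diagonal, MatB_eq_diagonal, diagonal_pow, diagonal_pow, diagonal_mul_diagonal]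
  congr 1
  ext i; fin_cases i <;> simp

lemma semiconjBy_MatC_MatA : SemiconjBy MatC MatA MatB := by
  simp [SemiconjBy, MatA, MatB, MatC]

lemma semiconjBy_MatC_MatB : SemiconjBy MatC MatB MatA := by
  simp [SemiconjBy, MatA, MatB, MatC]

lemma commute_MatA_MatB : Commute MatA MatB := by
  simp [Commute, SemiconjBy, MatA, MatB]

lemma MatC_mul_MatA_pow_mul_MatB_pow (x y : ℕ) :
    MatC * (MatA ^ x * MatB ^ y) = MatA ^ y * MatB ^ x * MatC := by
  rw [((semiconjBy_MatC_MatA.pow_right x).mul_right (semiconjBy_MatC_MatB.pow_right y)).eq,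
    ((commute_MatA_MatB.pow_pow y x).symm).eq]

lemma MatC_pow_mul_MatA_pow_mul_MatB_pow (r x y : ℕ) :
    MatC ^ r * (MatA ^ x * MatB ^ y) =
      (if Even r then MatA ^ x * MatB ^ y else MatA ^ y * MatB ^ x) * MatC ^ r := by
  induction r generalizing x y with
  | zero => simp
  | succ r ih =>
    rw [pow_succ, mul_assoc, MatC_mul_MatA_pow_mul_MatB_pow, ← mul_assoc, ih]
    by_cases hr : Even r <;> simp [hr, Nat.even_add_one, mul_assoc]

lemma MatA_pow_mul_MatB_pow_mul (p q x y : ℕ) :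
    MatA ^ p * MatB ^ q * (MatA ^ x * MatB ^ y) = MatA ^ (p + x) * MatB ^ (q + y) := by
  simp only [MatA_pow_mul_MatB_pow, diagonal_mul_diagonal]
  congr 1
  ext i; fin_cases i <;> simp [pow_add]

lemma normalForm_mul (p q r x y z : ℕ) :
    normalForm (p, q, r) * normalForm (x, y, z) =
      normalForm (if Even r then (p + x, q + y, r + z) else (p + y, q + x, r + z)) := by
  calc normalForm (p, q, r) * normalForm (x, y, z)
      = MatA ^ p * MatB ^ q * (MatC ^ r * (MatA ^ x * MatB ^ y)) * MatC ^ z := by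
        simp only [normalForm, mul_assoc]
    _ = _ := by
        rw [MatC_pow_mul_MatA_pow_mul_MatB_pow]
        split_ifs <;>
          rw [← mul_assoc (MatA ^ p * MatB ^ q), MatA_pow_mul_MatB_pow_mul, mul_assoc, ← pow_add] <;>
          rfl

lemma natAbs_det_normalForm (t : ℕ × ℕ × ℕ) :
    (normalForm t).det.natAbs = 2 ^ (t.1 + t.2.1) * 6 ^ t.2.2 := by
  simp [normalForm, det_mul, det_pow, pow_add, Int.natAbs_mul, Int.natAbs_pow, MatA, MatB, MatC,
    det_fin_two_of]

lemma isRegular_normalForm (t : ℕ × ℕ × ℕ) : IsRegular (normalForm t) := by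
  refine isRegular_of_isLeftRegular_det (IsRegular.of_ne_zero ?_).left
  rw [← Int.natAbs_ne_zero, natAbs_det_normalForm]
  positivity

lemma normalForm_injective : Function.Injective normalForm := by
  rintro ⟨a, b, c⟩ ⟨a', b', c'⟩ h
  obtain rfl : c = c' := by
    have := congrArg (fun M => M.det.natAbs.factorization 3) h
    simpa only [natAbs_det_normalForm, factorization_two_pow_mul_six_pow_three] using this
  have hC : IsRightRegular (MatC ^ c) := by
    simpa [normalForm] using (isRegular_normalForm (0, 0, c)).right
  have hab := hC h
  rw [MatA_pow_mul_MatB_pow, MatA_pow_mul_MatB_pow] at hab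
  obtain rfl : b = b' := by simpa using congrFun (congrFun hab 0) 0
  obtain rfl : a = a' := by simpa using congrFun (congrFun hab 1) 1
  rfl

lemma exists_normalForm_eq_of_mem {s : Matrix (Fin 2) (Fin 2) ℤ} (hs : s ∈ SemigroupT) :
    ∃ t, normalForm t = s := by
  induction hs using Subsemigroup.closure_induction with
  | mem x hx =>
    rcases hx with rfl | rfl | rfl
    · exact ⟨(1, 0, 0), by simp [normalForm]⟩
    · exact ⟨(0, 1, 0), by simp [normalForm]⟩
    · exact ⟨(0, 0, 1), by simp [normalForm]⟩
  | mul x y _ _ hx hy =>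
    obtain ⟨⟨p, q, r⟩, rfl⟩ := hx
    obtain ⟨⟨a, b, c⟩, rfl⟩ := hy
    exact ⟨_, (normalForm_mul p q r a b c).symm⟩

lemma FolnerF_eq_image (N : ℕ) : FolnerF N = (range N ×ˢ range N ×ˢ range N).image normalForm :=
  rfl

lemma card_FolnerF (N : ℕ) : #(FolnerF N) = N ^ 3 := by
  rw [FolnerF_eq_image, card_image_of_injective _ normalForm_injective]
  rw [card_product, card_product, card_range]
  ring

lemma FolnerF_mono : Monotone FolnerF := fun _ _ hMN =>
  image_subset_image (product_subset_product (range_mono hMN)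
    (product_subset_product (range_mono hMN) (range_mono hMN)))

lemma image_mul_FolnerF_subset (p q r n : ℕ) :
    (FolnerF n).image (normalForm (p, q, r) * ·) ⊆ FolnerF (n + (p + q + r)) := by
  simp only [FolnerF_eq_image, image_image, image_subset_iff, mem_product, mem_range]
  rintro ⟨x, y, z⟩ ⟨hx, hy, hz⟩
  dsimp only at hy hz
  refine mem_image.mpr ⟨_, ?_, (normalForm_mul p q r x y z).symm⟩
  split_ifs <;> simp only [mem_product, mem_range] <;> omega

/-- The semigroup `T` generated by `A, B, C` is left amenable: the sets `F_N`
form a left Følner sequence, i.e. `|s F_N △ F_N| / |F_N| → 0` for every `s ∈ T`. -/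
theorem matrixT_folner :
    ∀ s ∈ SemigroupT,
      Filter.Tendsto
        (fun N : ℕ =>
          (((((FolnerF N).image fun m => s * m) ∆ FolnerF N).card : ℝ) /
            ((FolnerF N).card : ℝ)))
        Filter.atTop (nhds 0) := by
  intro s hs
  obtain ⟨⟨p, q, r⟩, rfl⟩ := exists_normalForm_eq_of_mem hs
  set k := p + q + r
  rw [← tendsto_add_atTop_iff_nat k]
  have hlim : Tendsto (fun n : ℕ => 2 * (1 - ((n : ℝ) / (n + k)) ^ 3)) atTop (nhds 0) := by
    simpa using (((tendsto_natCast_div_add_atTop (k : ℝ)).pow 3).const_sub 1).const_mul 2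
  refine squeeze_zero (fun _ => by positivity) (fun n => ?_) hlim
  have := card_image_symmDiff_div_card_le (isRegular_normalForm _).left.injOn
    (FolnerF_mono (Nat.le_add_right n k)) (image_mul_FolnerF_subset p q r n)
  simpa [card_FolnerF, div_pow] using this
end

section
/- In Thompson's semigroup with the index total order, for every X ∈ S with X_0 ∤ X one has X_1 X ≺ X X_2, where ≺ is the total order determined by (ind, ind_0, ind_1, ...). -/
/-! A word representing `Y` has no letter `0`, since a letter `0` can always be moved to the
front. Congruent words have the same length and, as long as one of them avoids the letters
below `k`, the same number of letters `k`. So `X_1 Y` and `Y X_2`, represented by `1 :: w` and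
`w ++ [2]`, agree in `ind` and `ind_0` (no zeros at all) and `X_1 Y` has one more letter `1`. -/

namespace ThompsonS

def ofList (w : List ℕ) : ThompsonS := thompsonCon.mk' (FreeMonoid.ofList w)

theorem ofList_surjective : Function.Surjective ofList := fun x => by
  obtain ⟨w, rfl⟩ := thompsonCon.mk'_surjective x
  exact ⟨w.toList, by rw [ofList, FreeMonoid.ofList_toList]⟩

theorem ofList_eq_ofList_iff {v w : List ℕ} :
    ofList v = ofList w ↔ thompsonCon (FreeMonoid.ofList v) (FreeMonoid.ofList w) :=
  Con.eq _

theorem ofList_cons (a : ℕ) (t : List ℕ) : ofList (a :: t) = X a * ofList t := by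
  rw [ofList, FreeMonoid.ofList_cons, map_mul]; rfl

theorem ofList_concat (w : List ℕ) (a : ℕ) : ofList (w ++ [a]) = ofList w * X a := by
  rw [ofList, FreeMonoid.ofList_append, map_mul, FreeMonoid.ofList_singleton]; rfl

theorem X_mul_X_of_lt {i j : ℕ} (hij : i < j) : X j * X i = X i * X (j + 1) :=
  Quotient.sound (ConGen.Rel.of _ _ ⟨i, j, hij, rfl, rfl⟩)

theorem thompsonCon_le_ker_s17 {M : Type*} [Monoid M] (f : FreeMonoid ℕ →* M)
    (hf : ∀ i j, i < j → f (.of j) * f (.of i) = f (.of i) * f (.of (j + 1))) :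
    thompsonCon ≤ Con.ker f :=
  Con.conGen_le.2 fun _ _ ⟨i, j, hij, ha, hb⟩ => by
    rw [Con.ker_rel, ha, hb, map_mul, map_mul]; exact hf i j hij

theorem length_eq_of_thompsonCon {v w : FreeMonoid ℕ} (h : thompsonCon v w) :
    v.length = w.length := by
  have := thompsonCon_le_ker_s17 (FreeMonoid.lift fun _ => Multiplicative.ofAdd 1)
    (fun _ _ _ => by simp only [FreeMonoid.lift_eval_of]) h
  simpa [Con.ker_rel, FreeMonoid.lift_apply, FreeMonoid.length] using this

/-- A relation `X_j X_i = X_i X_{j+1}` can create or destroy a letter `k` (as `j + 1 = k`) only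
next to a letter `i < k`, which makes both sides `0`; hence `guardedCount k` is invariant. -/
noncomputable def guardedCount (k : ℕ) : FreeMonoid ℕ →* WithZero (Multiplicative ℕ) :=
  FreeMonoid.lift fun n =>
    if n < k then 0 else if n = k then ((Multiplicative.ofAdd 1 : Multiplicative ℕ) : _) else 1

theorem guardedCount_ofList {k : ℕ} {w : List ℕ} (hw : ∀ a ∈ w, k ≤ a) :
    guardedCount k (FreeMonoid.ofList w) = ↑(Multiplicative.ofAdd (w.count k)) := by
  induction w with
  | nil => simp
  | cons a t ih =>
    rw [FreeMonoid.ofList_cons, map_mul, ih fun b hb => hw b (List.mem_cons_of_mem a hb),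
      guardedCount, FreeMonoid.lift_eval_of, if_neg (hw a List.mem_cons_self).not_gt, List.count_cons]
    rcases eq_or_ne a k with rfl | h
    · simp [← WithZero.coe_mul, ← ofAdd_add, add_comm]
    · simp [h]

theorem guardedCount_ofList_eq_zero {k : ℕ} {w : List ℕ} (hw : ∃ a ∈ w, a < k) :
    guardedCount k (FreeMonoid.ofList w) = 0 := by
  obtain ⟨a, ha, hak⟩ := hw
  rw [guardedCount, FreeMonoid.lift_ofList]
  exact List.prod_eq_zero (List.mem_map.2 ⟨a, ha, if_pos hak⟩)

theorem thompsonCon_le_ker_guardedCount (k : ℕ) : thompsonCon ≤ Con.ker (guardedCount k) :=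
  thompsonCon_le_ker_s17 _ fun i j hij => by
    simp only [guardedCount, FreeMonoid.lift_eval_of]
    rcases lt_trichotomy i k with hik | rfl | hki
    · simp [hik]
    · simp [hij.not_gt, hij.ne', (hij.trans j.lt_succ_self).not_gt, (hij.trans j.lt_succ_self).ne']
    · have hkj : k < j := hki.trans hij
      simp [hki.not_gt, hki.ne', hkj.not_gt, hkj.ne', (hkj.trans j.lt_succ_self).not_gt,
        (hkj.trans j.lt_succ_self).ne']

theorem count_eq_of_thompsonCon {k : ℕ} {v w : List ℕ}
    (h : thompsonCon (FreeMonoid.ofList v) (FreeMonoid.ofList w)) (hw : ∀ a ∈ w, k ≤ a) :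
    v.count k = w.count k := by
  have hvw := thompsonCon_le_ker_guardedCount k h
  rw [Con.ker_rel, guardedCount_ofList hw] at hvw
  have hv : ∀ a ∈ v, k ≤ a := by
    by_contra! hv
    rw [guardedCount_ofList_eq_zero hv] at hvw
    exact WithZero.zero_ne_coe hvw
  rw [guardedCount_ofList hv, WithZero.coe_inj] at hvw
  exact Multiplicative.ofAdd.injective hvw

-- The lower-bound clause is the invariant that keeps `b :: u` sorted in the inductive step.
theorem exists_sorted_ofList_eq_X_mul (a : ℕ) {t : List ℕ} (ht : t.Pairwise (· ≤ ·)) :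
    ∃ u : List ℕ, u.Pairwise (· ≤ ·) ∧ ofList u = X a * ofList t ∧
      ∀ c ≤ a, (∀ b ∈ t, c ≤ b) → ∀ x ∈ u, c ≤ x := by
  induction t generalizing a with
  | nil => exact ⟨[a], List.pairwise_singleton _ _, ofList_cons a [], by simp⟩
  | cons b s ih =>
    rw [List.pairwise_cons] at ht
    rcases le_or_gt a b with hab | hba
    · refine ⟨a :: b :: s, ?_, ofList_cons a _, fun c hca hcbs x hx => ?_⟩
      · exact List.pairwise_cons.2 ⟨fun x hx => (List.mem_cons.1 hx).elim (· ▸ hab)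
          fun hx => hab.trans (ht.1 x hx), List.pairwise_cons.2 ht⟩
      · rcases List.mem_cons.1 hx with rfl | hx
        · exact hca
        · exact hcbs x hx
    · obtain ⟨u, hu, hu_eq, hu_lb⟩ := ih (a + 1) ht.2
      refine ⟨b :: u, List.pairwise_cons.2 ⟨hu_lb b (by omega) ht.1, hu⟩, ?_, ?_⟩
      · rw [ofList_cons, hu_eq, ofList_cons, ← mul_assoc, ← mul_assoc, X_mul_X_of_lt hba]
      · intro c hca hcbs x hx
        rcases List.mem_cons.1 hx with rfl | hx
        · exact hcbs x List.mem_cons_self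
        · exact hu_lb c (by omega) (fun y hy => hcbs y (List.mem_cons_of_mem b hy)) x hx

theorem exists_sorted_ofList_eq (w : List ℕ) :
    ∃ u : List ℕ, u.Pairwise (· ≤ ·) ∧ ofList u = ofList w := by
  induction w with
  | nil => exact ⟨[], List.Pairwise.nil, rfl⟩
  | cons a t ih =>
    obtain ⟨u, hu, hu_eq⟩ := ih
    obtain ⟨v, hv, hv_eq, -⟩ := exists_sorted_ofList_eq_X_mul a hu
    exact ⟨v, hv, by rw [hv_eq, hu_eq, ofList_cons]⟩

theorem ind_ofList (w : List ℕ) : ind (ofList w) = w.length := by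
  have hS : {n | ∃ v : FreeMonoid ℕ, thompsonCon.mk' v = ofList w ∧ v.length = n} =
      {w.length} := by
    refine Set.eq_singleton_iff_unique_mem.2 ⟨⟨FreeMonoid.ofList w, rfl, rfl⟩, ?_⟩
    rintro _ ⟨v, hv, rfl⟩
    exact length_eq_of_thompsonCon ((Con.eq _).1 hv)
  rw [ind, hS, csInf_singleton]

theorem indAt_ofList {k : ℕ} {w : List ℕ} (hw : ∀ a ∈ w, k ≤ a) :
    indAt k (ofList w) = w.count k := by
  have hS : {n | ∃ v : List ℕ, v.Pairwise (· ≤ ·) ∧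
      thompsonCon.mk' (FreeMonoid.ofList v) = ofList w ∧ v.count k = n} = {w.count k} := by
    obtain ⟨u, hu, hu_eq⟩ := exists_sorted_ofList_eq w
    refine Set.eq_singleton_iff_unique_mem.2
      ⟨⟨u, hu, hu_eq, (count_eq_of_thompsonCon (ofList_eq_ofList_iff.1 hu_eq) hw)⟩, ?_⟩
    rintro _ ⟨v, -, hv, rfl⟩
    exact (count_eq_of_thompsonCon (ofList_eq_ofList_iff.1 hv) hw)
  rw [indAt, hS, csInf_singleton]

theorem X_zero_dvd_ofList {w : List ℕ} (hw : 0 ∈ w) : X 0 ∣ ofList w := by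
  induction w with
  | nil => simp at hw
  | cons a t ih =>
    rw [ofList_cons]
    rcases eq_or_ne a 0 with rfl | ha
    · exact dvd_mul_right _ _
    · obtain ⟨z, hz⟩ := ih ((List.mem_cons.1 hw).resolve_left (Ne.symm ha))
      exact ⟨X (a + 1) * z, by rw [hz, ← mul_assoc, X_mul_X_of_lt (Nat.pos_of_ne_zero ha),
        mul_assoc]⟩

theorem tlt_of_indAt_one_lt {u v : ThompsonS} (hind : ind u = ind v)
    (h₀ : indAt 0 u = indAt 0 v) (h₁ : indAt 1 v < indAt 1 u) : tlt u v :=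
  Or.inr ⟨hind, Or.inr ⟨h₀, 1, le_rfl, fun j hj => by rwa [Nat.lt_one_iff.1 hj], h₁⟩⟩

end ThompsonS

open ThompsonS

/-- In Thompson's semigroup, if `X_0 ∤ X` then `X_1 X ≺ X X_2` in the total
order determined by `(ind, ind_0, ind_1, ...)`. -/
theorem thompson_X1_mul_lt (Y : ThompsonS) (h : ¬ X 0 ∣ Y) :
    tlt (X 1 * Y) (Y * X 2) := by
  obtain ⟨w, rfl⟩ := ofList_surjective Y
  have hw : ∀ a ∈ w, 1 ≤ a := fun a ha =>
    Nat.one_le_iff_ne_zero.2 fun ha0 => h (X_zero_dvd_ofList (ha0 ▸ ha))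
  have hl : ∀ a ∈ 1 :: w, 1 ≤ a := by simpa using hw
  have hr : ∀ a ∈ w ++ [2], 1 ≤ a := by simpa [or_imp, forall_and] using hw
  rw [← ofList_cons, ← ofList_concat]
  apply tlt_of_indAt_one_lt
  · simp [ind_ofList]
  · rw [indAt_ofList (by simp), indAt_ofList (by simp)]
    simp
  · rw [indAt_ofList hl, indAt_ofList hr]
    simp
end

section
/- Let ℳ(S) = {T ∈ ℒ(S) : [T, A] ∈ 𝔅(S) for all A ∈ 𝔅(S)}, a norm-closed subspace of ℒ(S) containing 𝔅(S). The commutant identity ℒ(S) ∩ 𝔅(S)′ = ℂ·I holds, where 𝔅(S)′ is the commutant of 𝔅(S) in B(ℓ²(S)). -/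
noncomputable instance : DecidableEq ThompsonS := Classical.decEq _

/-- The Hilbert space `ℓ²(S)` of Thompson's semigroup. -/
noncomputable abbrev ThompsonH : Type := lp (fun _ : ThompsonS => ℂ) 2

set_option synthInstance.maxHeartbeats 1000000
set_option maxHeartbeats 1000000

/-!
The normal forms of Thompson's monoid are its nondecreasing words. They show that `X m` is left
cancellative and that, once `m` exceeds every letter of `w ≠ 1`, `X m * w` is not a right multiple
of `X m`. If `T` commutes with all left and right convolutions and `ξ = T δ₁`, then
`L_s ξ = T δ_s = R_s ξ`; evaluating both sides at `X m * w` gives `ξ w = 0`, so `ξ ∈ ℂ δ₁` and `T`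
is scalar. The rest is soft: `𝔅`, the closure of the algebra generated by the `L_s`, lies in the
bicommutant of `{L_s}`, which contains every `R_t`, and commutator conditions against the closed
set `𝔅` cut out closed sets.
-/

namespace ThompsonS

/-- `insertGen a l` is the normal form of `X a * l` for a normal form `l`: `X a` moves right past
each smaller letter `b` by `X a X b = X b X (a+1)`. -/
def insertGen : ℕ → List ℕ → List ℕ
  | a, [] => [a]
  | a, b :: l => if b < a then b :: insertGen (a + 1) l else a :: b :: l

def normalize (l : List ℕ) : List ℕ := l.foldr insertGen []

lemma insertGen_insertGen {i j : ℕ} (hij : i < j) (l : List ℕ) :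
    insertGen j (insertGen i l) = insertGen i (insertGen (j + 1) l) := by
  induction l generalizing i j with
  | nil => simp [insertGen, hij, show ¬ j + 1 < i by omega]
  | cons b l ih =>
    by_cases hbi : b < i
    · simp [insertGen, hbi, show b < j by omega, show b < j + 1 by omega,
        ih (i := i + 1) (j := j + 1) (by omega)]
    · by_cases hbj : b < j + 1
      · simp [insertGen, hbi, hij, hbj]
      · simp [insertGen, hbi, hij, hbj, show ¬ j + 1 < i by omega]

lemma foldr_insertGen_insertGen (a : ℕ) (u w : List ℕ) :
    (insertGen a u).foldr insertGen w = insertGen a (u.foldr insertGen w) := by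
  induction u generalizing a with
  | nil => rfl
  | cons b u ih =>
    by_cases hb : b < a
    · simp [insertGen, hb, ih, insertGen_insertGen hb]
    · simp [insertGen, hb]

lemma foldr_insertGen_normalize (l w : List ℕ) :
    (normalize l).foldr insertGen w = l.foldr insertGen w := by
  induction l with
  | nil => rfl
  | cons a l ih => simp [normalize, foldr_insertGen_insertGen, ← ih]

lemma normalize_append (u v : List ℕ) : normalize (u ++ v) = u.foldr insertGen (normalize v) := by
  rw [normalize, List.foldr_append]
  rfl

def normalizeCon : Con (FreeMonoid ℕ) where
  r a b := normalize a.toList = normalize b.toList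
  iseqv := ⟨fun _ => rfl, Eq.symm, Eq.trans⟩
  mul' {a b x y} hab hxy := by
    simp only [FreeMonoid.toList_mul, normalize_append]
    rw [← foldr_insertGen_normalize a.toList, ← foldr_insertGen_normalize b.toList, hab, hxy]

lemma thompsonCon_le_normalizeCon : thompsonCon ≤ normalizeCon := by
  refine Con.conGen_le.mpr ?_
  rintro _ _ ⟨i, j, hij, rfl, rfl⟩
  show insertGen j (insertGen i []) = insertGen i (insertGen (j + 1) [])
  simp [insertGen, hij, show ¬ j + 1 < i by omega]

def normalForm : ThompsonS → List ℕ :=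
  Quotient.lift (fun w : FreeMonoid ℕ => normalize w.toList) fun _ _ h =>
    thompsonCon_le_normalizeCon h

def ofWord (l : List ℕ) : ThompsonS := thompsonCon.mk' (FreeMonoid.ofList l)

lemma ofWord_surjective : Function.Surjective ofWord := thompsonCon.mk'_surjective

lemma ofWord_cons (a : ℕ) (l : List ℕ) : ofWord (a :: l) = X a * ofWord l := rfl

lemma ofWord_append (u v : List ℕ) : ofWord (u ++ v) = ofWord u * ofWord v := rfl

lemma normalForm_ofWord (l : List ℕ) : normalForm (ofWord l) = normalize l := rfl

lemma ofWord_insertGen (a : ℕ) (l : List ℕ) : ofWord (insertGen a l) = X a * ofWord l := by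
  induction l generalizing a with
  | nil => rfl
  | cons b l ih =>
    by_cases hb : b < a
    · have hrel : X a * X b = X b * X (a + 1) :=
        thompsonCon.eq.mpr (ConGen.Rel.of _ _ ⟨b, a, hb, rfl, rfl⟩)
      simp only [insertGen, if_pos hb, ofWord_cons, ih, ← mul_assoc, hrel]
    · simp only [insertGen, if_neg hb, ofWord_cons]

lemma ofWord_normalize (l : List ℕ) : ofWord (normalize l) = ofWord l := by
  induction l with
  | nil => rfl
  | cons a l ih => rw [normalize, List.foldr_cons, ofWord_insertGen, ← normalize, ih, ofWord_cons]

lemma normalForm_injective : Function.Injective normalForm := by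
  intro s t h
  obtain ⟨u, rfl⟩ := ofWord_surjective s
  obtain ⟨v, rfl⟩ := ofWord_surjective t
  rw [← ofWord_normalize u, ← ofWord_normalize v]
  exact congrArg ofWord h

lemma normalForm_X_mul (m : ℕ) (s : ThompsonS) :
    normalForm (X m * s) = insertGen m (normalForm s) := by
  obtain ⟨l, rfl⟩ := ofWord_surjective s
  rfl

lemma normalForm_mul_X (m : ℕ) (s : ThompsonS) :
    normalForm (s * X m) = (normalForm s).foldr insertGen [m] := by
  obtain ⟨l, rfl⟩ := ofWord_surjective s
  show normalize (l ++ [m]) = (normalize l).foldr insertGen [m]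
  rw [normalize_append, foldr_insertGen_normalize]
  rfl

lemma length_insertGen (a : ℕ) (l : List ℕ) : (insertGen a l).length = l.length + 1 := by
  induction l generalizing a with
  | nil => rfl
  | cons b l ih => by_cases hb : b < a <;> simp [insertGen, hb, ih]

lemma insertGen_injective (a : ℕ) : Function.Injective (insertGen a) := by
  intro l l' h
  induction l generalizing a l' with
  | nil =>
    cases l' with
    | nil => rfl
    | cons => simpa [length_insertGen] using congrArg List.length h
  | cons b l ih =>
    cases l' with
    | nil => simpa [length_insertGen] using congrArg List.length h
    | cons b' l' =>
      by_cases hb : b < a <;> by_cases hb' : b' < a <;>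
        simp only [insertGen, hb, hb', if_true, if_false, List.cons.injEq] at h
      · rw [h.1, ih (a + 1) h.2]
      · omega
      · omega
      · rw [h.2.1, h.2.2]

lemma mem_insertGen_of_mem {x : ℕ} {l : List ℕ} (hx : x ∈ l) (a : ℕ) : x ∈ insertGen a l := by
  induction l generalizing a with
  | nil => simp at hx
  | cons b l ih =>
    by_cases hb : b < a
    · rcases List.mem_cons.mp hx with rfl | hx
      · simp [insertGen, hb]
      · simp [insertGen, hb, ih hx]
    · simp [insertGen, hb, hx]

lemma mem_foldr_insertGen (m : ℕ) (l : List ℕ) : m ∈ l.foldr insertGen [m] := by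
  induction l with
  | nil => simp
  | cons a l ih => exact mem_insertGen_of_mem ih a

lemma insertGen_of_forall_lt {m : ℕ} {l : List ℕ} (hl : ∀ x ∈ l, x < m) :
    insertGen m l = l ++ [m + l.length] := by
  induction l generalizing m with
  | nil => rfl
  | cons b l ih =>
    have hlt : ∀ x ∈ l, x < m + 1 := fun x hx => by have := hl x (by simp [hx]); omega
    simp [insertGen, hl b (by simp), ih hlt]
    omega

lemma X_mul_injective (m : ℕ) : Function.Injective (X m * ·) := fun s t h =>
  normalForm_injective <| insertGen_injective m <| by
    rw [← normalForm_X_mul, ← normalForm_X_mul]; exact congrArg normalForm h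

/-- The normal form of `X m * w` is that of `w` followed by a letter `> m`, so it avoids `m`,
whereas `m` occurs in the normal form of every right multiple of `X m`. -/
lemma mul_X_ne_X_mul {m : ℕ} {w : ThompsonS} (hw : w ≠ 1) (hm : ∀ x ∈ normalForm w, x < m)
    (u : ThompsonS) : u * X m ≠ X m * w := by
  intro h
  have hmem := mem_foldr_insertGen m (normalForm u)
  rw [← normalForm_mul_X, h, normalForm_X_mul, insertGen_of_forall_lt hm] at hmem
  have hne : normalForm w ≠ [] := fun h0 => hw (normalForm_injective h0)
  rcases List.mem_append.mp hmem with hmw | hlast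
  · exact lt_irrefl m (hm m hmw)
  · exact hne (by simpa using hlast)

lemma exists_mul_left_cancel_and_forall_mul_ne {w : ThompsonS} (hw : w ≠ 1) :
    ∃ s : ThompsonS, (∀ u, s * u = s * w → u = w) ∧ ∀ u, u * s ≠ s * w := by
  obtain ⟨m, hm⟩ := (normalForm w).toFinset.exists_nat_subset_range
  exact ⟨X m, fun u h => X_mul_injective m h,
    mul_X_ne_X_mul hw fun x hx => Finset.mem_range.mp (hm (List.mem_toFinset.mpr hx))⟩

end ThompsonS

namespace lp

variable {𝕜 : Type*} [NormedField 𝕜] {α β : Type*} [DecidableEq α] [DecidableEq β]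
  {p : ENNReal} [Fact (1 ≤ p)]

lemma ext_single {F : Type*} [AddCommMonoid F] [Module 𝕜 F] [TopologicalSpace F] [T2Space F]
    (hp : p ≠ ⊤) {T₁ T₂ : lp (fun _ : α => 𝕜) p →L[𝕜] F}
    (h : ∀ a, T₁ (lp.single p a 1) = T₂ (lp.single p a 1)) : T₁ = T₂ :=
  lp.ext_continuousLinearMap hp fun a => ContinuousLinearMap.ext_ring (h a)

variable (hp : p ≠ ⊤) {A : lp (fun _ : α => 𝕜) p →L[𝕜] lp (fun _ : β => 𝕜) p} {φ : α → β}
  (hA : ∀ a, A (lp.single p a 1) = lp.single p (φ a) 1) (ξ : lp (fun _ : α => 𝕜) p)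
include hp hA

lemma hasSum_apply_of_apply_single (b : β) :
    HasSum (fun a => if φ a = b then ξ a else 0) (A ξ b) := by
  have hsum := (lp.hasSum_single hp ξ).mapL ((lp.evalCLM 𝕜 (fun _ : β => 𝕜) p b).comp A)
  have hterm : ∀ a, (lp.evalCLM 𝕜 (fun _ : β => 𝕜) p b).comp A (lp.single p a (ξ a))
      = if φ a = b then ξ a else 0 := fun a => by
    have hsingle : lp.single (E := fun _ : α => 𝕜) p a (ξ a) = ξ a • lp.single p a (1 : 𝕜) := by
      rw [← lp.single_smul, smul_eq_mul, mul_one]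
    simp [hsingle, hA, lp.evalCLM, lp.single_apply, Pi.single_apply, eq_comm]
  simp only [hterm] at hsum
  exact hsum

lemma apply_apply_of_apply_single {w : α} (hw : ∀ a, φ a = φ w → a = w) : A ξ (φ w) = ξ w := by
  refine (lp.hasSum_apply_of_apply_single hp hA ξ (φ w)).unique ?_
  convert hasSum_ite_eq w (ξ w) using 2 with a
  by_cases ha : a = w
  · simp [ha]
  · simp only [ha, if_false, ite_eq_right_iff]
    exact fun h => absurd (hw a h) ha

lemma apply_eq_zero_of_apply_single {b : β} (hb : ∀ a, φ a ≠ b) : A ξ b = 0 :=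
  (lp.hasSum_apply_of_apply_single hp hA ξ b).unique (by simp [hb])

end lp

section RegularRepresentation

variable {M : Type*} [Monoid M] [DecidableEq M] {p : ENNReal} [Fact (1 ≤ p)] (hp : p ≠ ⊤)
  {L R : M → lp (fun _ : M => ℂ) p →L[ℂ] lp (fun _ : M => ℂ) p}
  (hL : ∀ s u, L s (lp.single p u 1) = lp.single p (s * u) 1)
  (hR : ∀ s u, R s (lp.single p u 1) = lp.single p (u * s) 1)
include hp hL hR

lemma commute_left_right_regular (s t : M) : Commute (L s) (R t) :=
  lp.ext_single hp fun u => by simp only [mul_apply_eq_comp, hL, hR, mul_assoc]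

theorem exists_eq_smul_one_of_commute_left_right_regular
    (hM : ∀ w ≠ (1 : M), ∃ s, (∀ u, s * u = s * w → u = w) ∧ ∀ u, u * s ≠ s * w)
    {T : lp (fun _ : M => ℂ) p →L[ℂ] lp (fun _ : M => ℂ) p}
    (hTL : ∀ s, Commute T (L s)) (hTR : ∀ s, Commute T (R s)) : ∃ c : ℂ, c • 1 = T := by
  set ξ := T (lp.single p 1 1)
  have hLξ : ∀ s, L s ξ = T (lp.single p s 1) := fun s => by
    rw [← mul_apply_eq_comp, ← (hTL s).eq, mul_apply_eq_comp, hL, mul_one]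
  have hRξ : ∀ s, R s ξ = T (lp.single p s 1) := fun s => by
    rw [← mul_apply_eq_comp, ← (hTR s).eq, mul_apply_eq_comp, hR, one_mul]
  have hξ : ∀ w ≠ 1, ξ w = 0 := fun w hw => by
    obtain ⟨s, hs_inj, hs_ne⟩ := hM w hw
    rw [← lp.apply_apply_of_apply_single hp (hL s) ξ hs_inj, hLξ, ← hRξ,
      lp.apply_eq_zero_of_apply_single hp (hR s) ξ hs_ne]
  have hξ_single : ξ = ξ 1 • lp.single p 1 1 := by
    ext w
    by_cases hw : w = 1
    · simp [hw]
    · simp [hw, hξ w hw]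
  refine ⟨ξ 1, lp.ext_single hp fun u => ?_⟩
  calc (ξ 1 • 1 : lp (fun _ : M => ℂ) p →L[ℂ] lp (fun _ : M => ℂ) p) (lp.single p u 1)
      = L u (ξ 1 • lp.single p 1 1) := by
        rw [map_smul, hL, mul_one, smul_apply, one_apply_eq_self]
    _ = T (lp.single p u 1) := by rw [← hξ_single, hLξ]

end RegularRepresentation

section Commutators

variable {A : Type*} [Ring A] [TopologicalSpace A] [IsTopologicalRing A]

lemma isClosed_setOf_forall_commute [T2Space A] {ι : Type*} (f : ι → A) :
    IsClosed {T | ∀ i, Commute T (f i)} := by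
  simp only [Set.ofPred_forall]
  exact isClosed_iInter fun i => isClosed_eq (by fun_prop) (by fun_prop)

lemma isClosed_setOf_forall_sub_mem {B : Set A} (hB : IsClosed B) (S : Set A) :
    IsClosed {T | ∀ a ∈ S, T * a - a * T ∈ B} := by
  simp only [Set.ofPred_forall]
  exact isClosed_iInter fun a => isClosed_iInter fun _ => hB.preimage (by fun_prop)

end Commutators

/-- Let `L`, `R` be the left and right regular (convolution) representations of
Thompson's semigroup on `ℓ²(S)` and `𝔅(S)` the Banach algebra generated by
`{L s}`.  Let `ℒ(S)` be the algebra of bounded left convolution operators, i.e.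
the commutant of the right convolution operators, and let
`ℳ(S) = {T ∈ ℒ(S) : [T, A] ∈ 𝔅(S) for all A ∈ 𝔅(S)}`.  Then `ℳ(S)` is a
norm-closed subspace of `ℒ(S)` containing `𝔅(S)`, and the commutant identity
`ℒ(S) ∩ 𝔅(S)′ = ℂ·I` holds, where `𝔅(S)′` is the commutant of `𝔅(S)` in
`B(ℓ²(S))`. -/
theorem thompson_M_closed_and_commutant_identity
    (L R : ThompsonS → (ThompsonH →L[ℂ] ThompsonH))
    (hL : ∀ s u : ThompsonS, L s (lp.single 2 u 1) = lp.single 2 (s * u) 1)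
    (hR : ∀ s u : ThompsonS, R s (lp.single 2 u 1) = lp.single 2 (u * s) 1)
    (𝔅 : Subalgebra ℂ (ThompsonH →L[ℂ] ThompsonH))
    (h𝔅 : 𝔅 = (Algebra.adjoin ℂ (Set.range L)).topologicalClosure)
    (ℒ ℳ : Set (ThompsonH →L[ℂ] ThompsonH))
    (hℒ : ℒ = {T | ∀ s : ThompsonS, Commute T (R s)})
    (hℳ : ℳ = {T ∈ ℒ | ∀ A ∈ 𝔅, T * A - A * T ∈ (𝔅 : Set (ThompsonH →L[ℂ] ThompsonH))}) :
    IsClosed ℳ ∧ (𝔅 : Set (ThompsonH →L[ℂ] ThompsonH)) ⊆ ℳ ∧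
      ℒ ∩ {T | ∀ B ∈ 𝔅, Commute T B} =
        Set.range (fun c : ℂ => c • (1 : ThompsonH →L[ℂ] ThompsonH)) := by
  subst hℒ hℳ h𝔅
  have hp : (2 : ENNReal) ≠ ⊤ := ENNReal.ofNat_ne_top
  have hL𝔅 : ∀ s, L s ∈ (Algebra.adjoin ℂ (Set.range L)).topologicalClosure := fun s =>
    Subalgebra.le_topologicalClosure _ (Algebra.subset_adjoin ⟨s, rfl⟩)
  have h𝔅ℒ : ∀ B ∈ (Algebra.adjoin ℂ (Set.range L)).topologicalClosure, ∀ s, Commute B (R s) :=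
    fun B hB s => Subalgebra.topologicalClosure_adjoin_le_centralizer_centralizer ℂ _ hB (R s)
      (by rintro _ ⟨t, rfl⟩; exact commute_left_right_regular hp hL hR t s) |>.symm
  refine ⟨(isClosed_setOf_forall_commute R).inter (isClosed_setOf_forall_sub_mem
    (Subalgebra.isClosed_topologicalClosure _) _), fun B hB => ⟨h𝔅ℒ B hB, fun A hA =>
      Subalgebra.sub_mem _ (Subalgebra.mul_mem _ hB hA) (Subalgebra.mul_mem _ hA hB)⟩, ?_⟩
  ext T
  constructor
  · rintro ⟨hTR, hTB⟩
    exact exists_eq_smul_one_of_commute_left_right_regular hp hL hR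
      (fun _ => ThompsonS.exists_mul_left_cancel_and_forall_mul_ne) (fun s => hTB _ (hL𝔅 s)) hTR
  · rintro ⟨c, rfl⟩
    exact ⟨fun _ => (Commute.one_left _).smul_left c, fun _ _ => (Commute.one_left _).smul_left c⟩
end
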